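/- arXiv:2410.00158 — 3 statements merged into one kernel-verified Lean document; each statement's English description precedes it below -/
import Mathlib

section
/- Let X₁, X₂ be nonnegative random variables that are pairwise asymptotically independent in the sense that lim_{x→∞} P(X₁ > x, X₂ > x)/P(X₁ > x) = 0, and suppose both have common regularly varying tail F̄ ∈ RV_{-α} with α > 0. Then P(X₁ + X₂ > x) ~ 2 F̄(x) as x → ∞. -/
open MeasureTheory Filter Topology

/-- If `X₁, X₂ ≥ 0` are asymptotically independent with common regularly varying tail
`F̄ ∈ RV_{-α}`, then `P(X₁ + X₂ > x) ~ 2 F̄(x)`. -/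
theorem stmt_8 {Ω : Type*} [MeasurableSpace Ω] (μ : Measure Ω) [IsProbabilityMeasure μ]
    (X₁ X₂ : Ω → ℝ) (h1 : Measurable X₁) (h2 : Measurable X₂)
    (hnn1 : ∀ ω, 0 ≤ X₁ ω) (hnn2 : ∀ ω, 0 ≤ X₂ ω)
    (Fbar : ℝ → ℝ) (α : ℝ) (hα : 0 < α)
    (hFpos : ∀ x, 0 < Fbar x)
    (htail1 : ∀ x : ℝ, (μ {ω | x < X₁ ω}).toReal = Fbar x)
    (htail2 : ∀ x : ℝ, (μ {ω | x < X₂ ω}).toReal = Fbar x)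
    (hRV : ∀ y : ℝ, 0 < y →
      Tendsto (fun x : ℝ => Fbar (y * x) / Fbar x) atTop (𝓝 (y ^ (-α))))
    (hAI : Tendsto (fun x : ℝ =>
      (μ {ω | x < X₁ ω ∧ x < X₂ ω}).toReal / (μ {ω | x < X₁ ω}).toReal)
      atTop (𝓝 0)) :
    Tendsto (fun x : ℝ => (μ {ω | x < X₁ ω + X₂ ω}).toReal / (2 * Fbar x))
      atTop (𝓝 1) := by
  have hFne : ∀ x, Fbar x ≠ 0 := fun x => (hFpos x).ne'
  -- measurability of basic sets
  have mB : ∀ x : ℝ, MeasurableSet {ω | x < X₂ ω} :=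
    fun x => measurableSet_lt measurable_const h2
  -- joint tail
  set I : ℝ → ℝ := fun x => (μ ({ω | x < X₁ ω} ∩ {ω | x < X₂ ω})).toReal with hIdef
  have hInn : ∀ x, 0 ≤ I x := fun x => ENNReal.toReal_nonneg
  have hAI' : Tendsto (fun x => I x / Fbar x) atTop (𝓝 0) := by
    have : (fun x => I x / Fbar x)
        = fun x : ℝ => (μ {ω | x < X₁ ω ∧ x < X₂ ω}).toReal / (μ {ω | x < X₁ ω}).toReal := by
      funext x; rw [htail1]; rfl
    rw [this]; exact hAI
  -- lower bound
  have hlow : ∀ x : ℝ, 1 - (I x / Fbar x) / 2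
      ≤ (μ {ω | x < X₁ ω + X₂ ω}).toReal / (2 * Fbar x) := by
    intro x
    have hsub : {ω | x < X₁ ω} ∪ {ω | x < X₂ ω} ⊆ {ω | x < X₁ ω + X₂ ω} := by
      rintro ω (h | h) <;> simp only [Set.mem_setOf_eq] at *
      · linarith [hnn2 ω]
      · linarith [hnn1 ω]
    have hunion : (μ ({ω | x < X₁ ω} ∪ {ω | x < X₂ ω})).toReal + I x = Fbar x + Fbar x := by
      rw [← ENNReal.toReal_add (measure_ne_top μ _) (measure_ne_top μ _),
        measure_union_add_inter _ (mB x),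
        ENNReal.toReal_add (measure_ne_top μ _) (measure_ne_top μ _), htail1, htail2]
    have hmono : (μ ({ω | x < X₁ ω} ∪ {ω | x < X₂ ω})).toReal
        ≤ (μ {ω | x < X₁ ω + X₂ ω}).toReal :=
      ENNReal.toReal_mono (measure_ne_top μ _) (measure_mono hsub)
    have h2F : (0:ℝ) < 2 * Fbar x := by have := hFpos x; linarith
    have key : (2 * Fbar x - I x) / (2 * Fbar x)
        ≤ (μ {ω | x < X₁ ω + X₂ ω}).toReal / (2 * Fbar x) := by
      gcongr
      linarith
    calc 1 - (I x / Fbar x) / 2 = (2 * Fbar x - I x) / (2 * Fbar x) := by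
          field_simp [hFne x]
      _ ≤ _ := key
  -- upper bound
  have hup : ∀ t : ℝ, 0 < t → t < 1 → ∀ x : ℝ,
      (μ {ω | x < X₁ ω + X₂ ω}).toReal / (2 * Fbar x)
        ≤ Fbar (t * x) / Fbar x + (I ((1 - t) * x) / Fbar x) / 2 := by
    intro t ht0 ht1 x
    have hsub : {ω | x < X₁ ω + X₂ ω}
        ⊆ ({ω | t * x < X₁ ω} ∪ {ω | t * x < X₂ ω})
          ∪ ({ω | (1 - t) * x < X₁ ω} ∩ {ω | (1 - t) * x < X₂ ω}) := by
      intro ω hω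
      simp only [Set.mem_setOf_eq, Set.mem_union, Set.mem_inter_iff] at *
      by_cases ha : t * x < X₁ ω
      · exact Or.inl (Or.inl ha)
      by_cases hb : t * x < X₂ ω
      · exact Or.inl (Or.inr hb)
      push_neg at ha hb
      exact Or.inr ⟨by nlinarith, by nlinarith⟩
    have hmeas : μ {ω | x < X₁ ω + X₂ ω}
        ≤ μ {ω | t * x < X₁ ω} + μ {ω | t * x < X₂ ω}
          + μ ({ω | (1 - t) * x < X₁ ω} ∩ {ω | (1 - t) * x < X₂ ω}) := by
      refine (measure_mono hsub).trans ?_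
      refine (measure_union_le _ _).trans ?_
      gcongr
      exact measure_union_le _ _
    have hN : (μ {ω | x < X₁ ω + X₂ ω}).toReal
        ≤ Fbar (t * x) + Fbar (t * x) + I ((1 - t) * x) := by
      have := ENNReal.toReal_mono
        (by finiteness) hmeas
      rwa [ENNReal.toReal_add (by finiteness) (by finiteness),
        ENNReal.toReal_add (by finiteness) (by finiteness), htail1, htail2] at this
    have h2F : (0:ℝ) < 2 * Fbar x := by have := hFpos x; linarith
    calc (μ {ω | x < X₁ ω + X₂ ω}).toReal / (2 * Fbar x)
        ≤ (Fbar (t * x) + Fbar (t * x) + I ((1 - t) * x)) / (2 * Fbar x) :=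
          by gcongr
      _ = Fbar (t * x) / Fbar x + (I ((1 - t) * x) / Fbar x) / 2 := by
          field_simp [hFne x]
          ring
  -- limit of scaled joint tail
  have hIlim : ∀ δ : ℝ, 0 < δ → Tendsto (fun x => I (δ * x) / Fbar x) atTop (𝓝 0) := by
    intro δ hδ
    have hcomp : Tendsto (fun x : ℝ => δ * x) atTop atTop :=
      tendsto_id.const_mul_atTop hδ
    have h1' : Tendsto (fun x => I (δ * x) / Fbar (δ * x)) atTop (𝓝 0) :=
      hAI'.comp hcomp
    have h2' := hRV δ hδ
    have hprod := h1'.mul h2'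
    rw [zero_mul] at hprod
    refine hprod.congr fun x => ?_
    rw [div_mul_div_comm, mul_comm (I (δ * x)), mul_div_mul_left _ _ (hFne (δ * x))]
  refine tendsto_order.2 ⟨fun a ha => ?_, fun b hb => ?_⟩
  · -- lower
    have hL : Tendsto (fun x => 1 - (I x / Fbar x) / 2) atTop (𝓝 1) := by
      have := tendsto_const_nhds (x := (1:ℝ)) (f := atTop).sub (hAI'.div_const 2)
      simpa using this
    filter_upwards [hL.eventually_const_lt ha] with x hx
    exact hx.trans_le (hlow x)
  · -- upper
    obtain ⟨t, htb, ht0, ht1⟩ : ∃ t : ℝ, t ^ (-α) < b ∧ 0 < t ∧ t < 1 := by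
      have hc : ContinuousAt (fun t : ℝ => t ^ (-α)) 1 :=
        Real.continuousAt_rpow_const 1 (-α) (Or.inl one_ne_zero)
      have hT : Tendsto (fun t : ℝ => t ^ (-α)) (𝓝[<] (1:ℝ)) (𝓝 1) := by
        have := hc.tendsto
        rw [Real.one_rpow] at this
        exact this.mono_left nhdsWithin_le_nhds
      have h2' : ∀ᶠ t in 𝓝[<] (1:ℝ), t ^ (-α) < b := hT.eventually_lt_const hb
      have h3' : ∀ᶠ t in 𝓝[<] (1:ℝ), 0 < t :=
        eventually_nhdsWithin_of_eventually_nhds (eventually_gt_nhds zero_lt_one)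
      have h4' : ∀ᶠ t in 𝓝[<] (1:ℝ), t < 1 := eventually_mem_nhdsWithin
      exact (h2'.and (h3'.and h4')).exists.imp fun t ⟨a, b, c⟩ => ⟨a, b, c⟩
    have hg : Tendsto (fun x => Fbar (t * x) / Fbar x + (I ((1 - t) * x) / Fbar x) / 2)
        atTop (𝓝 (t ^ (-α))) := by
      have := (hRV t ht0).add ((hIlim (1 - t) (by linarith)).div_const 2)
      simpa using this
    filter_upwards [hg.eventually_lt_const htb] with x hx
    exact (hup t ht0 ht1 x).trans_lt hx
end

section
/- Let F be a distribution function with F̄ ∈ RV_{-α}, α > 0, and let F^← (q) = inf{y : F(y) ≥ q} be the quantile function. Then F̄(F^←(q)) ~ 1 - q as q ↑ 1. -/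
open Filter Topology Set

/-- If `F` is a distribution function with regularly varying tail `F̄ ∈ RV_{-α}`,
`α > 0`, and `F^←(q) = inf{y : F(y) ≥ q}`, then `F̄(F^←(q)) ~ 1 - q` as `q ↑ 1`. -/
theorem stmt_10 (F : ℝ → ℝ) (α : ℝ) (hα : 0 < α)
    (hmono : Monotone F)
    (hlt1 : ∀ x, F x < 1)
    (hlim : Tendsto F atTop (𝓝 1))
    (hRV : ∀ y : ℝ, 0 < y →
      Tendsto (fun x : ℝ => (1 - F (y * x)) / (1 - F x)) atTop (𝓝 (y ^ (-α)))) :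
    Tendsto (fun q : ℝ => (1 - F (sInf {y : ℝ | q ≤ F y})) / (1 - q))
      (nhdsWithin 1 (Iio 1)) (𝓝 1) := by
  set Q : ℝ → ℝ := fun q => sInf {y : ℝ | q ≤ F y} with hQdef
  have hpos : ∀ x, 0 < 1 - F x := fun x => by linarith [hlt1 x]
  have hne : ∀ q : ℝ, q < 1 → {y : ℝ | q ≤ F y}.Nonempty := by
    intro q hq
    obtain ⟨x, hx⟩ := (hlim.eventually (eventually_ge_nhds hq)).exists
    exact ⟨x, hx⟩
  have hQge : ∀ M q : ℝ, F M < q → q < 1 → M ≤ Q q := by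
    intro M q hMq hq1
    refine le_csInf (hne q hq1) fun s hs => ?_
    by_contra h
    push_neg at h
    exact absurd (hs.trans (hmono h.le)) (not_le.2 hMq)
  have hbdd : ∀ q : ℝ, F 1 < q → BddBelow {y : ℝ | q ≤ F y} := by
    intro q hq
    refine ⟨1, fun s hs => ?_⟩
    by_contra h
    push_neg at h
    exact absurd (hs.trans (hmono h.le)) (not_le.2 hq)
  have hQtop : Tendsto Q (𝓝[<] (1:ℝ)) atTop := by
    rw [tendsto_atTop]
    intro M
    filter_upwards [Ioo_mem_nhdsLT_of_mem (show (1:ℝ) ∈ Ioc (F M) 1 from ⟨hlt1 M, le_refl 1⟩)]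
      with q hq
    exact hQge M q hq.1 hq.2
  have hFQup : ∀ q : ℝ, q < 1 → ∀ w, Q q < w → q ≤ F w := by
    intro q hq w hw
    obtain ⟨s, hs, hsw⟩ := exists_lt_of_csInf_lt (hne q hq) hw
    exact hs.trans (hmono hsw.le)
  have hFQlow : ∀ q : ℝ, F 1 < q → ∀ w, w < Q q → F w ≤ q := by
    intro q hq w hw
    by_contra h
    push_neg at h
    exact absurd (csInf_le (hbdd q hq) h.le) (not_le.2 hw)
  -- key tendsto for ratio of tails at t·Q and t⁻¹·Q
  have key : ∀ t : ℝ, 1 < t →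
      Tendsto (fun q => (1 - F (t * Q q)) / (1 - F (t⁻¹ * Q q))) (𝓝[<] (1:ℝ))
        (𝓝 (t ^ (-α) * t ^ (-α))) := by
    intro t ht
    have ht0 : (0:ℝ) < t := lt_trans one_pos ht
    have h1 := (hRV t ht0).comp hQtop
    have h2 := (hRV t⁻¹ (inv_pos.2 ht0)).comp hQtop
    have hne2 : (t⁻¹ : ℝ) ^ (-α) ≠ 0 := (Real.rpow_pos_of_pos (inv_pos.2 ht0) _).ne'
    have h3 := h1.div h2 hne2
    have heq : ∀ q : ℝ, ((1 - F (t * Q q)) / (1 - F (Q q))) / ((1 - F (t⁻¹ * Q q)) / (1 - F (Q q)))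
        = (1 - F (t * Q q)) / (1 - F (t⁻¹ * Q q)) := by
      intro q
      have h0 : (1 - F (Q q)) ≠ 0 := (hpos _).ne'
      field_simp
    have hval : t ^ (-α) / (t⁻¹ : ℝ) ^ (-α) = t ^ (-α) * t ^ (-α) := by
      rw [Real.inv_rpow ht0.le]
      field_simp
    rw [← hval]
    exact h3.congr heq
  -- the bound, eventually
  have hbound : ∀ t : ℝ, 1 < t → ∀ᶠ q in 𝓝[<] (1:ℝ),
      (1 - F (t * Q q)) / (1 - F (t⁻¹ * Q q)) ≤ (1 - F (Q q)) / (1 - q) ∧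
      (1 - F (Q q)) / (1 - q) ≤ (1 - F (t⁻¹ * Q q)) / (1 - F (t * Q q)) := by
    intro t ht
    have ht0 : (0:ℝ) < t := lt_trans one_pos ht
    filter_upwards [Ioo_mem_nhdsLT_of_mem (show (1:ℝ) ∈ Ioc (F 1) 1 from ⟨hlt1 1, le_refl 1⟩)]
      with q hq
    have hx1 : 1 ≤ Q q := hQge 1 q hq.1 hq.2
    have hx0 : 0 < Q q := lt_of_lt_of_le one_pos hx1
    have hlt : t⁻¹ * Q q < Q q := by
      nlinarith [inv_lt_one_of_one_lt₀ ht, inv_pos.2 ht0]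
    have hgt : Q q < t * Q q := by nlinarith
    have h1 : q ≤ F (t * Q q) := hFQup q hq.2 _ hgt
    have h2 : F (t⁻¹ * Q q) ≤ q := hFQlow q hq.1 _ hlt
    have hm1 : F (Q q) ≤ F (t * Q q) := hmono hgt.le
    have hm2 : F (t⁻¹ * Q q) ≤ F (Q q) := hmono hlt.le
    constructor
    · exact div_le_div₀ (hpos _).le (by linarith) (by linarith [hq.2]) (by linarith)
    · exact div_le_div₀ (hpos _).le (by linarith) (hpos (t * Q q)) (by linarith)
  rw [tendsto_order]
  constructor
  · intro a ha
    rcases le_or_gt a 0 with h0 | h0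
    · filter_upwards [self_mem_nhdsWithin] with q hq
      have : (0:ℝ) < (1 - F (Q q)) / (1 - q) := div_pos (hpos _) (by have := mem_Iio.1 hq; linarith)
      linarith
    · set u : ℝ := Real.sqrt ((a + 1) / 2) with hu
      have hu0 : 0 < u := Real.sqrt_pos.2 (by linarith)
      have huu : u * u = (a + 1) / 2 := Real.mul_self_sqrt (by linarith)
      have hu1 : u < 1 := by nlinarith
      set t : ℝ := u ^ (-α⁻¹) with htdef
      have ht1 : 1 < t := (Real.one_lt_rpow_iff_of_pos hu0).2 (Or.inr ⟨hu1, by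
        simp [inv_pos.2 hα]⟩)
      have htu : t ^ (-α) = u := by
        rw [htdef, ← Real.rpow_mul hu0.le, neg_mul_neg, inv_mul_cancel₀ hα.ne', Real.rpow_one]
      have hkey := key t ht1
      rw [htu] at hkey
      have hev := hkey.eventually (eventually_gt_nhds (show a < u * u by nlinarith))
      filter_upwards [hev, hbound t ht1] with q h1 h2
      exact lt_of_lt_of_le h1 h2.1
  · intro b hb
    set u : ℝ := Real.sqrt (2 / (b + 1)) with hu
    have hb0 : (0:ℝ) < b + 1 := by linarith
    have hu0 : 0 < u := Real.sqrt_pos.2 (by positivity)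
    have huu : u * u = 2 / (b + 1) := Real.mul_self_sqrt (by positivity)
    have hfrac : 2 / (b + 1) < 1 := by rw [div_lt_one hb0]; linarith
    have hu1 : u < 1 := by nlinarith
    set t : ℝ := u ^ (-α⁻¹) with htdef
    have ht1 : 1 < t := (Real.one_lt_rpow_iff_of_pos hu0).2 (Or.inr ⟨hu1, by
      simp [inv_pos.2 hα]⟩)
    have htu : t ^ (-α) = u := by
      rw [htdef, ← Real.rpow_mul hu0.le, neg_mul_neg, inv_mul_cancel₀ hα.ne', Real.rpow_one]
    have hkey := (key t ht1).inv₀ (by rw [htu]; positivity)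
    rw [htu] at hkey
    have hcongr : ∀ q : ℝ, ((1 - F (t * Q q)) / (1 - F (t⁻¹ * Q q)))⁻¹
        = (1 - F (t⁻¹ * Q q)) / (1 - F (t * Q q)) := fun q => inv_div _ _
    have hkey2 := hkey.congr hcongr
    have hlim2 : (u * u)⁻¹ < b := by
      rw [huu, inv_div]
      rw [div_lt_iff₀ (by norm_num : (0:ℝ) < 2)]; nlinarith
    have hev := hkey2.eventually (eventually_lt_nhds hlim2)
    filter_upwards [hev, hbound t ht1] with q h1 h2
    exact lt_of_le_of_lt h2.2 h1
end

section
/- Let X be nonnegative with regularly varying tail F̄ ∈ RV_{-α}, α > 0, and let W₁, W₂ be nonnegative random variables bounded above by a constant M, with (W₁,W₂) independent of (X₁,X₂), where X₁, X₂ each have tail F̄ and are asymptotically independent: P(X₁ > x, X₂ > x) = o(P(X₁ > x)). Then P(W₁X₁ > x, W₂X₂ > x) = o(P(W₁X₁ > x)) as x → ∞, provided lim inf P(W₁X₁ > x)/F̄(x) > 0. -/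
open Filter Topology MeasureTheory ProbabilityTheory

/-- If `X₁, X₂` are asymptotically independent with common regularly varying tail `F̄`,
`W₁, W₂ ≤ M` are nonnegative with `(W₁,W₂)` independent of `(X₁,X₂)`, and
`lim inf P(W₁X₁ > x)/F̄(x) > 0`, then `P(W₁X₁ > x, W₂X₂ > x) = o(P(W₁X₁ > x))`. -/
theorem stmt_16 {Ω : Type*} [MeasurableSpace Ω] (μ : Measure Ω) [IsProbabilityMeasure μ]
    (X₁ X₂ W₁ W₂ : Ω → ℝ)
    (hX₁ : Measurable X₁) (hX₂ : Measurable X₂)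
    (hW₁ : Measurable W₁) (hW₂ : Measurable W₂)
    (hX₁nn : ∀ ω, 0 ≤ X₁ ω) (hX₂nn : ∀ ω, 0 ≤ X₂ ω)
    (hW₁nn : ∀ ω, 0 ≤ W₁ ω) (hW₂nn : ∀ ω, 0 ≤ W₂ ω)
    (M : ℝ) (hM : 0 < M) (hW₁M : ∀ ω, W₁ ω ≤ M) (hW₂M : ∀ ω, W₂ ω ≤ M)
    (hindep : IndepFun (fun ω => (W₁ ω, W₂ ω)) (fun ω => (X₁ ω, X₂ ω)) μ)
    (Fbar : ℝ → ℝ) (α : ℝ) (hα : 0 < α)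
    (hFpos : ∀ x, 0 < Fbar x)
    (htail1 : ∀ x : ℝ, (μ {ω | x < X₁ ω}).toReal = Fbar x)
    (htail2 : ∀ x : ℝ, (μ {ω | x < X₂ ω}).toReal = Fbar x)
    (hRV : ∀ y : ℝ, 0 < y →
      Tendsto (fun x : ℝ => Fbar (y * x) / Fbar x) atTop (𝓝 (y ^ (-α))))
    (hAI : Tendsto (fun x : ℝ =>
      (μ {ω | x < X₁ ω ∧ x < X₂ ω}).toReal / (μ {ω | x < X₁ ω}).toReal)
      atTop (𝓝 0))
    (hliminf : ∃ δ > (0 : ℝ), ∀ᶠ x in atTop,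
      δ * Fbar x ≤ (μ {ω | x < W₁ ω * X₁ ω}).toReal) :
    Tendsto (fun x : ℝ =>
        (μ {ω | x < W₁ ω * X₁ ω ∧ x < W₂ ω * X₂ ω}).toReal /
          (μ {ω | x < W₁ ω * X₁ ω}).toReal)
      atTop (𝓝 0) := by
  obtain ⟨δ, hδ, hev⟩ := hliminf
  set F2 : ℝ → ℝ := fun x => (μ {ω | x < X₁ ω ∧ x < X₂ ω}).toReal with hF2
  -- hAI in terms of Fbar
  have hAI' : Tendsto (fun x : ℝ => F2 x / Fbar x) atTop (𝓝 0) := by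
    have : (fun x : ℝ => F2 x / Fbar x) =
        (fun x : ℝ => (μ {ω | x < X₁ ω ∧ x < X₂ ω}).toReal /
          (μ {ω | x < X₁ ω}).toReal) := by
      funext x; rw [htail1 x]
    rw [this]; exact hAI
  have hdiv : Tendsto (fun x : ℝ => x / M) atTop atTop :=
    tendsto_id.atTop_div_const hM
  have h1 : Tendsto (fun x : ℝ => F2 (x / M) / Fbar (x / M)) atTop (𝓝 0) :=
    hAI'.comp hdiv
  have h2 : Tendsto (fun x : ℝ => Fbar (x / M) / Fbar x) atTop (𝓝 ((1 / M) ^ (-α))) := by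
    have := hRV (1 / M) (by positivity)
    simpa [one_div, div_eq_inv_mul] using this
  have h3 : Tendsto (fun x : ℝ => F2 (x / M) / Fbar x) atTop (𝓝 0) := by
    have := h1.mul h2
    rw [zero_mul] at this
    refine this.congr fun x => ?_
    rw [div_mul_div_comm, mul_comm (F2 _), mul_div_mul_left _ _ (hFpos (x/M)).ne']
  have h4 : Tendsto (fun x : ℝ => F2 (x / M) / Fbar x / δ) atTop (𝓝 0) := by
    simpa using h3.div_const δ
  refine squeeze_zero' ?_ ?_ h4
  · exact Eventually.of_forall fun x => div_nonneg ENNReal.toReal_nonneg ENNReal.toReal_nonneg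
  · filter_upwards [hev] with x hx
    have hFx := hFpos x
    have hden : 0 < δ * Fbar x := by positivity
    -- numerator bound by inclusion
    have hsub : {ω | x < W₁ ω * X₁ ω ∧ x < W₂ ω * X₂ ω} ⊆
        {ω | x / M < X₁ ω ∧ x / M < X₂ ω} := by
      intro ω ⟨h₁, h₂⟩
      constructor
      · rw [div_lt_iff₀ hM]
        calc x < W₁ ω * X₁ ω := h₁
          _ ≤ M * X₁ ω := mul_le_mul_of_nonneg_right (hW₁M ω) (hX₁nn ω)
          _ = X₁ ω * M := mul_comm _ _
      · rw [div_lt_iff₀ hM]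
        calc x < W₂ ω * X₂ ω := h₂
          _ ≤ M * X₂ ω := mul_le_mul_of_nonneg_right (hW₂M ω) (hX₂nn ω)
          _ = X₂ ω * M := mul_comm _ _
    have hnum : (μ {ω | x < W₁ ω * X₁ ω ∧ x < W₂ ω * X₂ ω}).toReal ≤ F2 (x / M) :=
      ENNReal.toReal_mono (measure_ne_top μ _) (measure_mono hsub)
    have hnumnn : (0:ℝ) ≤ (μ {ω | x < W₁ ω * X₁ ω ∧ x < W₂ ω * X₂ ω}).toReal :=
      ENNReal.toReal_nonneg
    calc (μ {ω | x < W₁ ω * X₁ ω ∧ x < W₂ ω * X₂ ω}).toReal /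
          (μ {ω | x < W₁ ω * X₁ ω}).toReal
        ≤ (μ {ω | x < W₁ ω * X₁ ω ∧ x < W₂ ω * X₂ ω}).toReal / (δ * Fbar x) :=
          div_le_div_of_nonneg_left hnumnn hden hx
      _ ≤ F2 (x / M) / (δ * Fbar x) := by gcongr
      _ = F2 (x / M) / Fbar x / δ := by rw [div_div, mul_comm]
end
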